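/- Let K/k be a finite separable field extension and A a finite-dimensional k-algebra. Then every finitely generated left A-module X is a direct summand of F(X ⊗_k K) (the restriction of scalars of its scalar extension), and every finitely generated left (A ⊗_k K)-module Y is a direct summand of F(Y) ⊗_k K. -/

import Mathlib

/-!
For an `A`-module `X`, the map `x ↦ x ⊗ 1` is split by `x ⊗ l ↦ g l • x` for any `k`-linear
`g : K → k` with `g 1 = 1`.

For an `A ⊗ K`-module `Y`, the map `y ⊗ l ↦ (1 ⊗ l) • y` is split by `y ↦ ∑ (1 ⊗ tᵢ) • y ⊗ sᵢ`,
where `e = ∑ tᵢ ⊗ sᵢ ∈ K ⊗[k] K` is a separability idempotent: `(l ⊗ 1) e = (1 ⊗ l) e` makes the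
splitting `A ⊗ K`-linear, and `∑ tᵢ sᵢ = 1` makes it a section. Separable extensions are
unramified, and unramified algebras carry such an element (`Algebra.FormallyUnramified.elem`).
-/

open TensorProduct CategoryTheory

noncomputable section

set_option maxHeartbeats 1000000

namespace PaperFE

variable {k K : Type} [Field k] [Field K] [Algebra k K]
variable {A : Type} [Ring A] [Algebra k A]

/-- The right multiplication action of `K` on `M ⊗[k] K`, as a ring homomorphism
to `k`-linear endomorphisms. -/
def rightSmulHom (M : Type) [AddCommGroup M] [Module k M] :
    K →+* Module.End k (TensorProduct k M K) where
  toFun l := LinearMap.lTensor M (Algebra.lmul k K l)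
  map_one' := by ext x y; simp
  map_mul' l m := by ext x y; simp [Module.End.mul_eq_comp, mul_assoc]
  map_zero' := by ext x y; simp
  map_add' l m := by ext x y; simp [mul_add, add_mul, tmul_add]

/-- `M ⊗[k] K` is a `K`-module via right multiplication. -/
instance modK (M : Type) [AddCommGroup M] [Module k M] :
    Module K (TensorProduct k M K) :=
  Module.compHom _ (rightSmulHom (k := k) (K := K) M)

lemma modK_smul_tmul {M : Type} [AddCommGroup M] [Module k M]
    (l : K) (m : M) (x : K) :
    l • (m ⊗ₜ[k] x) = m ⊗ₜ[k] (l * x) := rfl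

instance modK_smulCommClass (M : Type) [AddCommGroup M] [Module k M] :
    SMulCommClass k K (TensorProduct k M K) := by
  constructor
  intro c l x
  show c • ((rightSmulHom (k := k) (K := K) M l) x) = (rightSmulHom (k := k) (K := K) M l) (c • x)
  rw [LinearMap.map_smul]

instance modK_tower (M : Type) [AddCommGroup M] [Module k M] :
    IsScalarTower k K (TensorProduct k M K) := by
  constructor
  intro c l x
  show ((rightSmulHom (k := k) (K := K) M) (c • l)) x = c • ((rightSmulHom (k := k) (K := K) M) l) x
  have : (c • l : K) = (algebraMap k K c) * l := by rw [Algebra.smul_def]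
  rw [this, map_mul]
  induction x using TensorProduct.induction_on with
  | zero => simp
  | tmul m y =>
      show m ⊗ₜ[k] (algebraMap k K c * (l * y)) = c • (m ⊗ₜ[k] (l * y))
      rw [← Algebra.smul_def, tmul_smul]
  | add x y hx hy => simp only [map_add, smul_add, hx, hy]

instance modK_smulCommClassA (M : Type) [AddCommGroup M] [Module k M]
    [Module A M] [IsScalarTower k A M] :
    SMulCommClass A K (TensorProduct k M K) := by
  constructor
  intro a l x
  show a • ((rightSmulHom (k := k) (K := K) M l) x) = (rightSmulHom (k := k) (K := K) M l) (a • x)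
  induction x using TensorProduct.induction_on with
  | zero => simp
  | tmul m y =>
      show a • (m ⊗ₜ[k] (l * y)) = (rightSmulHom (k := k) (K := K) M l) (a • (m ⊗ₜ[k] y))
      rw [smul_tmul', smul_tmul']
      rfl
  | add x y hx hy => simp only [map_add, smul_add, hx, hy]

/-- The `A ⊗[k] K`-module structure on `M ⊗[k] K` for an `A`-module `M`. -/
instance extModule (M : Type) [AddCommGroup M] [Module k M]
    [Module A M] [IsScalarTower k A M] :
    Module (A ⊗[k] K) (TensorProduct k M K) :=
  TensorProduct.Algebra.module (R := k) (A := A) (B := K) (M := TensorProduct k M K)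

lemma extModule_tmul_smul {M : Type} [AddCommGroup M] [Module k M]
    [Module A M] [IsScalarTower k A M]
    (a : A) (l : K) (m : M) (y : K) :
    (a ⊗ₜ[k] l : A ⊗[k] K) • (m ⊗ₜ[k] y : TensorProduct k M K) = (a • m) ⊗ₜ[k] (l * y) := by
  rw [TensorProduct.Algebra.smul_def, modK_smul_tmul, smul_tmul']

section Functor

open ModuleCat

variable (k K A) in
/-- The scalar extension of an `A`-module, as a module over `A ⊗[k] K`. -/
def tensObj (M : ModuleCat A) : ModuleCat (A ⊗[k] K) :=
  ModuleCat.of (A ⊗[k] K) (TensorProduct k M K)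

variable (k K A) in
/-- The scalar extension functor `Mod A ⥤ Mod (A ⊗[k] K)`. -/
def tensUp : ModuleCat A ⥤ ModuleCat (A ⊗[k] K) where
  obj M := tensObj k K A M
  map {M N} f := ModuleCat.ofHom
    { toFun := LinearMap.rTensor K (LinearMap.restrictScalars k f.hom)
      map_add' := by intro x y; exact map_add _ x y
      map_smul' := by
        intro r x
        dsimp only [RingHom.id_apply]
        induction r using TensorProduct.induction_on with
        | zero => rw [zero_smul, zero_smul, map_zero]
        | add r s hr hs => rw [add_smul, add_smul, map_add, hr, hs]
        | tmul a l =>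
          induction x using TensorProduct.induction_on with
          | zero => rw [smul_zero, map_zero, smul_zero]
          | add x y hx hy => rw [smul_add, map_add, map_add, smul_add, hx, hy]
          | tmul m y =>
              rw [extModule_tmul_smul]
              rw [LinearMap.rTensor_tmul, LinearMap.rTensor_tmul]
              rw [extModule_tmul_smul]
              rw [LinearMap.restrictScalars_apply, LinearMap.restrictScalars_apply, map_smul] }
  map_id M := by
    apply ModuleCat.hom_ext
    apply LinearMap.ext
    intro x
    show LinearMap.rTensor K (LinearMap.restrictScalars k (LinearMap.id)) x = x
    induction x using TensorProduct.induction_on with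
    | zero => rw [map_zero]
    | tmul m y => rfl
    | add x y hx hy => rw [map_add, hx, hy]
  map_comp {M N P} f g := by
    apply ModuleCat.hom_ext
    apply LinearMap.ext
    intro x
    induction x using TensorProduct.induction_on with
    | zero => simp only [map_zero]
    | tmul m y => rfl
    | add x y hx hy =>
      simp only [map_add] at hx hy ⊢
      rw [hx, hy]

instance : (tensUp k K A).Additive where
  map_add := by
    intro M N f g
    apply ModuleCat.hom_ext
    apply LinearMap.ext
    intro x
    show LinearMap.rTensor K (LinearMap.restrictScalars k (f + g).hom) x =
      LinearMap.rTensor K (LinearMap.restrictScalars k f.hom) x +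
        LinearMap.rTensor K (LinearMap.restrictScalars k g.hom) x
    induction x using TensorProduct.induction_on with
    | zero => simp only [map_zero, add_zero]
    | tmul m y =>
      rw [LinearMap.rTensor_tmul, LinearMap.rTensor_tmul, LinearMap.rTensor_tmul]
      show (f.hom m + g.hom m) ⊗ₜ[k] y = (f.hom m) ⊗ₜ[k] y + (g.hom m) ⊗ₜ[k] y
      rw [add_tmul]
    | add x y hx hy =>
      rw [map_add, map_add, map_add, hx, hy]
      abel

variable (k K A) in
/-- Restriction of scalars along `A → A ⊗[k] K`. -/
def resDown : ModuleCat (A ⊗[k] K) ⥤ ModuleCat A :=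
  ModuleCat.restrictScalars (Algebra.TensorProduct.includeLeftRingHom (R := k) (A := A) (B := K))

instance : (resDown k K A).Additive where
  map_add := ModuleCat.hom_ext (LinearMap.ext fun _ => rfl)

end Functor


section Splitting

open ModuleCat

theorem exists_linearMap_apply_one_eq_one (F E : Type*) [Field F] [Ring E] [Nontrivial E]
    [Algebra F E] : ∃ g : E →ₗ[F] F, g 1 = 1 := by
  obtain ⟨g, hg⟩ := (Algebra.linearMap F E).exists_leftInverse_of_injective
    (LinearMap.ker_eq_bot.mpr (algebraMap F E).injective)
  exact ⟨g, by simpa using LinearMap.congr_fun hg 1⟩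

theorem map_smul_of_map_tmul_smul {R S T M N : Type*} [CommSemiring R] [Semiring S] [Semiring T]
    [Algebra R S] [Algebra R T] [AddCommMonoid M] [Module (S ⊗[R] T) M] [AddCommMonoid N]
    [Module (S ⊗[R] T) N] (f : M →+ N)
    (hf : ∀ (s : S) (t : T) (m : M), f ((s ⊗ₜ[R] t) • m) = (s ⊗ₜ[R] t) • f m)
    (r : S ⊗[R] T) (m : M) : f (r • m) = r • f m := by
  induction r using TensorProduct.induction_on with
  | zero => simp
  | tmul s t => exact hf s t m
  | add r r' hr hr' => rw [add_smul, map_add, hr, hr', add_smul]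

def tensUpUnit (X : ModuleCat A) : X ⟶ (resDown k K A).obj ((tensUp k K A).obj X) :=
  ModuleCat.ofHom (Y := (resDown k K A).obj ((tensUp k K A).obj X))
    { toFun x := x ⊗ₜ[k] (1 : K)
      map_add' x y := add_tmul x y 1
      map_smul' a x := by
        show (a • x) ⊗ₜ[k] (1 : K) = (a ⊗ₜ[k] (1 : K) : A ⊗[k] K) • (x ⊗ₜ[k] (1 : K))
        rw [extModule_tmul_smul, one_mul] }

def contractRight (g : K →ₗ[k] k) (X : ModuleCat A) : X ⊗[k] K →ₗ[k] X :=
  TensorProduct.lift ((LinearMap.lsmul k X).flip.compl₂ g)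

theorem contractRight_tmul (g : K →ₗ[k] k) (X : ModuleCat A) (x : X) (l : K) :
    contractRight g X (x ⊗ₜ l) = g l • x := rfl

theorem contractRight_tmul_one_smul (g : K →ₗ[k] k) (X : ModuleCat A) (a : A) (t : X ⊗[k] K) :
    contractRight g X ((a ⊗ₜ[k] (1 : K) : A ⊗[k] K) • t) = a • contractRight g X t := by
  induction t using TensorProduct.induction_on with
  | zero => simp
  | tmul x l =>
    rw [extModule_tmul_smul, one_mul, contractRight_tmul, contractRight_tmul]
    exact smul_comm (g l) a x
  | add s t hs ht => rw [smul_add, map_add, map_add, hs, ht, smul_add]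

def tensUpRetraction (g : K →ₗ[k] k) (X : ModuleCat A) :
    (resDown k K A).obj ((tensUp k K A).obj X) ⟶ X :=
  ModuleCat.ofHom (X := (resDown k K A).obj ((tensUp k K A).obj X))
    { toFun := contractRight g X
      map_add' := map_add _
      map_smul' := contractRight_tmul_one_smul g X }

theorem tensUpUnit_comp_tensUpRetraction {g : K →ₗ[k] k} (hg : g 1 = 1) (X : ModuleCat A) :
    tensUpUnit X ≫ tensUpRetraction g X = 𝟙 X := by
  ext x
  change g 1 • x = x
  rw [hg, one_smul]

variable (Y : ModuleCat (A ⊗[k] K))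

instance : Module (A ⊗[k] K) ((resDown k K A).obj Y) := inferInstanceAs (Module (A ⊗[k] K) Y)

theorem resDown_smul_def (a : A) (y : (resDown k K A).obj Y) :
    a • y = (a ⊗ₜ[k] (1 : K) : A ⊗[k] K) • y := rfl

def tmulSMul (a : A) : (resDown k K A).obj Y →ₗ[k] K →ₗ[k] (resDown k K A).obj Y :=
  LinearMap.mk₂ k (fun y p => (a ⊗ₜ[k] p : A ⊗[k] K) • y)
    (fun y y' p => smul_add _ y y')
    (fun c y p => smul_comm (α := Y) (a ⊗ₜ[k] p : A ⊗[k] K) c y)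
    (fun y p q => by rw [tmul_add, add_smul])
    (fun c y p => by
      rw [tmul_smul]
      exact (smul_assoc (α := Y) c (a ⊗ₜ[k] p : A ⊗[k] K) y :))

theorem tmulSMul_apply (a : A) (y : (resDown k K A).obj Y) (p : K) :
    tmulSMul Y a y p = (a ⊗ₜ[k] p : A ⊗[k] K) • y := rfl

theorem lift_tmulSMul_smul (a : A) (l : K) (t : TensorProduct k ((resDown k K A).obj Y) K) :
    TensorProduct.lift (tmulSMul Y 1) ((a ⊗ₜ[k] l : A ⊗[k] K) • t) =
      (a ⊗ₜ[k] l : A ⊗[k] K) • TensorProduct.lift (tmulSMul Y 1) t := by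
  induction t using TensorProduct.induction_on with
  | zero => simp
  | tmul y p =>
    rw [extModule_tmul_smul, lift.tmul, lift.tmul, tmulSMul_apply, tmulSMul_apply, resDown_smul_def]
    simp only [smul_smul, Algebra.TensorProduct.tmul_mul_tmul, one_mul, mul_one]
  | add s t hs ht => rw [smul_add, map_add, map_add, hs, ht, smul_add]

theorem rTensor_tmulSMul_tmul_smul (e : K ⊗[k] K) (a : A) (l : K) (y : (resDown k K A).obj Y) :
    (tmulSMul Y 1 ((a ⊗ₜ[k] l : A ⊗[k] K) • y)).rTensor K e =
      (tmulSMul Y a y).rTensor K ((l ⊗ₜ[k] 1) * e) := by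
  induction e using TensorProduct.induction_on with
  | zero => simp
  | tmul p q =>
    simp only [LinearMap.rTensor_tmul, Algebra.TensorProduct.tmul_mul_tmul, one_mul, tmulSMul_apply,
      smul_smul, mul_comm l p]
  | add e e' he he' => simp only [map_add, mul_add, he, he']

theorem tmul_smul_rTensor_tmulSMul (e : K ⊗[k] K) (a : A) (l : K) (y : (resDown k K A).obj Y) :
    (a ⊗ₜ[k] l : A ⊗[k] K) • (tmulSMul Y 1 y).rTensor K e =
      (tmulSMul Y a y).rTensor K ((1 ⊗ₜ[k] l) * e) := by
  induction e using TensorProduct.induction_on with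
  | zero => simp
  | tmul p q =>
    rw [LinearMap.rTensor_tmul, extModule_tmul_smul, Algebra.TensorProduct.tmul_mul_tmul, one_mul,
      LinearMap.rTensor_tmul, tmulSMul_apply, tmulSMul_apply, resDown_smul_def, smul_smul,
      Algebra.TensorProduct.tmul_mul_tmul, one_mul, mul_one]
  | add e e' he he' => rw [map_add, smul_add, he, he', mul_add, map_add]

theorem lift_tmulSMul_rTensor_tmulSMul (e : K ⊗[k] K) (y : (resDown k K A).obj Y) :
    TensorProduct.lift (tmulSMul Y 1) ((tmulSMul Y 1 y).rTensor K e) =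
      (1 ⊗ₜ[k] Algebra.TensorProduct.lmul' k e : A ⊗[k] K) • y := by
  induction e using TensorProduct.induction_on with
  | zero => simp
  | tmul p q =>
    rw [LinearMap.rTensor_tmul, lift.tmul, tmulSMul_apply, tmulSMul_apply, smul_smul,
      Algebra.TensorProduct.tmul_mul_tmul, one_mul, Algebra.TensorProduct.lmul'_apply_tmul, mul_comm]
  | add e e' he he' => rw [map_add, map_add, he, he', map_add, tmul_add, add_smul]

def resDownCounit : (tensUp k K A).obj ((resDown k K A).obj Y) ⟶ Y :=
  ModuleCat.ofHom (X := (tensUp k K A).obj ((resDown k K A).obj Y))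
    { toFun := TensorProduct.lift (tmulSMul Y 1)
      map_add' := map_add _
      map_smul' := map_smul_of_map_tmul_smul (TensorProduct.lift (tmulSMul Y 1)).toAddMonoidHom
        (lift_tmulSMul_smul Y) }

open Algebra.FormallyUnramified

variable [Algebra.FormallyUnramified k K] [Algebra.EssFiniteType k K]

def resDownSection : Y ⟶ (tensUp k K A).obj ((resDown k K A).obj Y) :=
  let f : (resDown k K A).obj Y →+ TensorProduct k ((resDown k K A).obj Y) K :=
    { toFun y := (tmulSMul Y 1 y).rTensor K (elem k K)
      map_zero' := by rw [map_zero, LinearMap.rTensor_zero, LinearMap.zero_apply]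
      map_add' y y' := by rw [map_add, LinearMap.rTensor_add, LinearMap.add_apply] }
  ModuleCat.ofHom (Y := (tensUp k K A).obj ((resDown k K A).obj Y))
    { toFun := f
      map_add' := map_add f
      map_smul' := map_smul_of_map_tmul_smul f fun a l y => by
        simp only [f, AddMonoidHom.coe_mk, ZeroHom.coe_mk]
        rw [rTensor_tmulSMul_tmul_smul, ← one_tmul_mul_elem, tmul_smul_rTensor_tmulSMul] }

theorem resDownSection_comp_resDownCounit : resDownSection Y ≫ resDownCounit Y = 𝟙 Y := by
  ext y
  have h := lift_tmulSMul_rTensor_tmulSMul Y (elem k K) y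
  rw [lmul_elem, ← Algebra.TensorProduct.one_def] at h
  exact h.trans (one_smul _ _)

end Splitting

variable (k K A) in
/-- over a finite separable field extension, every finitely generated
`A`-module is a direct summand of the restriction of its scalar extension, and every
finitely generated `A ⊗[k] K`-module is a direct summand of the scalar extension of
its restriction. -/
theorem stmt0 [FiniteDimensional k K] [Algebra.IsSeparable k K] [FiniteDimensional k A] :
    (∀ X : ModuleCat A, Module.Finite A X →
      ∃ (i : X ⟶ (resDown k K A).obj ((tensUp k K A).obj X))
        (r : (resDown k K A).obj ((tensUp k K A).obj X) ⟶ X), i ≫ r = 𝟙 X) ∧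
    (∀ Y : ModuleCat (A ⊗[k] K), Module.Finite (A ⊗[k] K) Y →
      ∃ (i : Y ⟶ (tensUp k K A).obj ((resDown k K A).obj Y))
        (r : (tensUp k K A).obj ((resDown k K A).obj Y) ⟶ Y), i ≫ r = 𝟙 Y) := by
  have := Algebra.FormallyUnramified.of_isSeparable k K
  obtain ⟨g, hg⟩ := exists_linearMap_apply_one_eq_one k K
  exact ⟨fun X _ => ⟨_, _, tensUpUnit_comp_tensUpRetraction hg X⟩,
    fun Y _ => ⟨_, _, resDownSection_comp_resDownCounit Y⟩⟩

end PaperFE
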